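/- arXiv:1703.10935 — 2 statements merged into one kernel-verified Lean document; each statement's English description precedes it below -/
import Mathlib

section
/- In the spike and normal model, the integrated risk of ridge is R(λ) = σ²/(1+λ)² + (1−p)(μ₀² + σ₀²) λ²/(1+λ)², and it is minimized over λ ∈ [0,∞] at λ* = σ²/((1−p)(μ₀² + σ₀²)), provided (1−p)(μ₀²+σ₀²) > 0. -/
open MeasureTheory ProbabilityTheory

/-- The spike and normal model: joint distribution of `(X, μ)` where `μ = 0` with probability `p`
and `μ ∼ N(μ₀, σ₀²)` otherwise, and `X | μ ∼ N(μ, σ²)`. -/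
noncomputable def spikeNormal (p μ₀ σ₀ σ : ℝ) : Measure (ℝ × ℝ) :=
  ENNReal.ofReal p •
      Measure.map (fun x => (x, (0 : ℝ))) (gaussianReal 0 ⟨σ^2, sq_nonneg σ⟩) +
    ENNReal.ofReal (1 - p) •
      Measure.bind (gaussianReal μ₀ ⟨σ₀^2, sq_nonneg σ₀⟩)
        (fun m => Measure.map (fun x => (x, m)) (gaussianReal m ⟨σ^2, sq_nonneg σ⟩))

/-!
Conditionally on `μ = m`, the error `X / (1 + λ) - m` of ridge is Gaussian with mean
`-λ m / (1 + λ)` and variance `σ² / (1 + λ)²`, so the conditional risk is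
`σ² / (1 + λ)² + (λ / (1 + λ))² m²`. Averaging over the prior, whose second moment is
`(1 - p)(μ₀² + σ₀²) =: K`, gives `R(λ) = (σ² + K λ²) / (1 + λ)²`, and
`R(λ) - R(σ² / K) = (σ² - K λ)² / ((σ² + K)(1 + λ)²) ≥ 0`.
-/

open scoped NNReal ENNReal

lemma integral_sq_gaussianReal (μ : ℝ) (v : ℝ≥0) :
    ∫ x, x ^ 2 ∂gaussianReal μ v = v + μ ^ 2 := by
  have h := variance_eq_sub (memLp_id_gaussianReal (μ := μ) (v := v) 2)
  rw [variance_id_gaussianReal] at h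
  simp only [Pi.pow_apply, id_eq, integral_id_gaussianReal] at h
  linarith

lemma integral_affine_sq_gaussianReal (μ a b : ℝ) (v : ℝ≥0) :
    ∫ x, (a * x + b) ^ 2 ∂gaussianReal μ v = a ^ 2 * v + (a * μ + b) ^ 2 := by
  have hmap : (gaussianReal μ v).map (fun x => a * x + b) =
      ((gaussianReal μ v).map (a * ·)).map (· + b) := by
    rw [Measure.map_map (by fun_prop) (by fun_prop)]
    rfl
  rw [← integral_map (f := fun y => y ^ 2) (by fun_prop) (by fun_prop), hmap,
    gaussianReal_map_const_mul, gaussianReal_map_add_const, integral_sq_gaussianReal]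
  simp

-- The variance is passed as `(v : ℝ) = s` so that at `v = ⟨σ ^ 2, _⟩` the result reads `σ ^ 2`:
-- `simp` does not simplify the coercion of that anonymous constructor.
lemma lintegral_ofReal_ridge_sq_gaussianReal (m : ℝ) {v : ℝ≥0} {s : ℝ} (hv : (v : ℝ) = s)
    {lam : ℝ} (hlam : 1 + lam ≠ 0) :
    ∫⁻ x, ENNReal.ofReal ((x / (1 + lam) - m) ^ 2) ∂gaussianReal m v =
      ENNReal.ofReal (s / (1 + lam) ^ 2 + (lam / (1 + lam)) ^ 2 * m ^ 2) := by
  subst hv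
  have hint : Integrable (fun x => ((1 + lam)⁻¹ * x + -m) ^ 2) (gaussianReal m v) :=
    (((memLp_id_gaussianReal 2).const_mul (1 + lam)⁻¹).add (memLp_const (-m))).integrable_sq
  simp_rw [div_eq_inv_mul, sub_eq_add_neg]
  rw [← ofReal_integral_eq_lintegral_ofReal hint (ae_of_all _ fun _ => sq_nonneg _),
    integral_affine_sq_gaussianReal]
  congr 1
  field_simp
  ring

lemma lintegral_ofReal_add_mul_sq_gaussianReal (μ : ℝ) {v : ℝ≥0} {s : ℝ} (hv : (v : ℝ) = s)
    {a b : ℝ} (ha : 0 ≤ a) (hb : 0 ≤ b) :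
    ∫⁻ x, ENNReal.ofReal (a + b * x ^ 2) ∂gaussianReal μ v =
      ENNReal.ofReal (a + b * (s + μ ^ 2)) := by
  subst hv
  have hsq : Integrable (fun x => x ^ 2) (gaussianReal μ v) :=
    (memLp_id_gaussianReal 2).integrable_sq
  have hint : Integrable (fun x => a + b * x ^ 2) (gaussianReal μ v) :=
    (integrable_const a).add (hsq.const_mul b)
  rw [← ofReal_integral_eq_lintegral_ofReal hint (ae_of_all _ fun _ => by positivity),
    integral_add (integrable_const a) (hsq.const_mul b), integral_const_mul,
    integral_sq_gaussianReal]
  simp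

lemma measurable_map_prodMk_gaussianReal (v : ℝ≥0) :
    Measurable fun m : ℝ => (gaussianReal m v).map (fun x => (x, m)) := by
  let κ : Kernel ℝ ℝ := ⟨fun m => gaussianReal m v,
    measurable_gaussianReal.comp (measurable_id.prodMk measurable_const)⟩
  have : IsMarkovKernel κ := ⟨fun m => inferInstanceAs (IsProbabilityMeasure (gaussianReal m v))⟩
  have hκ : (fun m : ℝ => (gaussianReal m v).map (fun x => (x, m))) = κ ×ₖ Kernel.id := by
    ext1 m
    rw [Kernel.prod_apply, Kernel.id_apply, Measure.prod_dirac]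
    rfl
  rw [hκ]
  exact Kernel.measurable _

-- Risks are computed as lower integrals of nonnegative losses: these split over the mixture and
-- iterate over `Measure.bind` with no integrability side conditions.
lemma lintegral_spikeNormal (p μ₀ σ₀ σ : ℝ) {g : ℝ × ℝ → ℝ≥0∞} (hg : Measurable g) :
    ∫⁻ z, g z ∂spikeNormal p μ₀ σ₀ σ =
      ENNReal.ofReal p * ∫⁻ x, g (x, 0) ∂gaussianReal 0 ⟨σ ^ 2, sq_nonneg σ⟩ +
      ENNReal.ofReal (1 - p) * ∫⁻ m, ∫⁻ x, g (x, m) ∂gaussianReal m ⟨σ ^ 2, sq_nonneg σ⟩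
        ∂gaussianReal μ₀ ⟨σ₀ ^ 2, sq_nonneg σ₀⟩ := by
  rw [spikeNormal, lintegral_add_measure, lintegral_smul_measure, lintegral_smul_measure,
    lintegral_map hg measurable_prodMk_right, Measure.lintegral_bind
      (measurable_map_prodMk_gaussianReal ⟨σ ^ 2, sq_nonneg σ⟩).aemeasurable hg.aemeasurable]
  simp_rw [lintegral_map hg measurable_prodMk_right, smul_eq_mul]

/-- The ridge risk `R(λ)` for noise variance `s` and prior second moment `K`. -/
noncomputable def ridgeRisk (s K lam : ℝ) : ℝ :=
  s / (1 + lam) ^ 2 + K * lam ^ 2 / (1 + lam) ^ 2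

lemma integral_spikeNormal_ridge_sq (p μ₀ σ₀ σ : ℝ) (hp : 0 ≤ p) (hp1 : p ≤ 1) {lam : ℝ}
    (hlam : 1 + lam ≠ 0) :
    ∫ z, (z.1 / (1 + lam) - z.2) ^ 2 ∂spikeNormal p μ₀ σ₀ σ =
      ridgeRisk (σ ^ 2) ((1 - p) * (μ₀ ^ 2 + σ₀ ^ 2)) lam := by
  rw [integral_eq_lintegral_of_nonneg_ae (ae_of_all _ fun _ => sq_nonneg _) (by fun_prop),
    lintegral_spikeNormal _ _ _ _ (by fun_prop)]
  simp only [lintegral_ofReal_ridge_sq_gaussianReal _ (v := ⟨σ ^ 2, sq_nonneg σ⟩) (s := σ ^ 2) rfl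
      hlam,
    lintegral_ofReal_add_mul_sq_gaussianReal _ (v := ⟨σ₀ ^ 2, sq_nonneg σ₀⟩) (s := σ₀ ^ 2) rfl
      (by positivity : 0 ≤ σ ^ 2 / (1 + lam) ^ 2) (sq_nonneg (lam / (1 + lam)))]
  rw [ENNReal.toReal_add (by finiteness) (by finiteness), ENNReal.toReal_mul, ENNReal.toReal_mul,
    ENNReal.toReal_ofReal hp, ENNReal.toReal_ofReal (sub_nonneg.2 hp1),
    ENNReal.toReal_ofReal (by positivity), ENNReal.toReal_ofReal (by positivity), ridgeRisk]
  field_simp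
  ring

lemma ridgeRisk_div_le {s K : ℝ} (hs : 0 ≤ s) (hK : 0 < K) {lam : ℝ} (hlam : 1 + lam ≠ 0) :
    ridgeRisk s K (s / K) ≤ ridgeRisk s K lam := by
  have h_opt : ridgeRisk s K (s / K) = s * K / (s + K) := by
    unfold ridgeRisk
    field_simp
    ring
  rw [h_opt, ridgeRisk, ← add_div, div_le_div_iff₀ (by positivity) (by positivity)]
  nlinarith [sq_nonneg (s - K * lam)]

theorem spike_normal_ridge_risk_general (p μ₀ σ₀ σ : ℝ) (hp : 0 ≤ p) (hp1 : p < 1)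
    (hpos : 0 < (1 - p) * (μ₀^2 + σ₀^2)) :
    (∀ lam : ℝ, 0 ≤ lam →
      ∫ z, (z.1 / (1 + lam) - z.2)^2 ∂(spikeNormal p μ₀ σ₀ σ) =
        σ^2 / (1 + lam)^2 + (1 - p) * (μ₀^2 + σ₀^2) * lam^2 / (1 + lam)^2) ∧
    (∀ lam : ℝ, 0 ≤ lam →
      ∫ z, (z.1 / (1 + σ^2 / ((1 - p) * (μ₀^2 + σ₀^2))) - z.2)^2 ∂(spikeNormal p μ₀ σ₀ σ) ≤
        ∫ z, (z.1 / (1 + lam) - z.2)^2 ∂(spikeNormal p μ₀ σ₀ σ)) := by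
  have risk {lam : ℝ} (hlam : 0 ≤ lam) :=
    integral_spikeNormal_ridge_sq p μ₀ σ₀ σ hp hp1.le (lam := lam) (by positivity)
  refine ⟨fun lam hlam => risk hlam, fun lam hlam => ?_⟩
  rw [risk hlam, risk (by positivity)]
  exact ridgeRisk_div_le (sq_nonneg σ) hpos (by positivity)

/-- In the spike and normal model, the integrated risk of ridge is
`R(λ) = σ²/(1+λ)² + (1−p)(μ₀² + σ₀²) λ²/(1+λ)²`, minimized over `λ ≥ 0` at
`λ* = σ²/((1−p)(μ₀² + σ₀²))`, provided `(1−p)(μ₀²+σ₀²) > 0`. -/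
theorem spike_normal_ridge_risk (p μ₀ σ₀ σ : ℝ) (hp : 0 ≤ p) (hp1 : p < 1)
    (hσ : 0 < σ) (hσ₀ : 0 ≤ σ₀) (hpos : 0 < (1 - p) * (μ₀^2 + σ₀^2)) :
    (∀ lam : ℝ, 0 ≤ lam →
      ∫ z, (z.1 / (1 + lam) - z.2)^2 ∂(spikeNormal p μ₀ σ₀ σ) =
        σ^2 / (1 + lam)^2 + (1 - p) * (μ₀^2 + σ₀^2) * lam^2 / (1 + lam)^2) ∧
    (∀ lam : ℝ, 0 ≤ lam →
      ∫ z, (z.1 / (1 + σ^2 / ((1 - p) * (μ₀^2 + σ₀^2))) - z.2)^2 ∂(spikeNormal p μ₀ σ₀ σ) ≤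
        ∫ z, (z.1 / (1 + lam) - z.2)^2 ∂(spikeNormal p μ₀ σ₀ σ)) :=
  spike_normal_ridge_risk_general p μ₀ σ₀ σ hp hp1 hpos
end

section
/- Stein's unbiased risk estimate for piecewise differentiable estimators: if μ ∼ ϑ, X|μ ∼ N(μ,1), f = ϑ ∗ φ is the marginal density of X, and m : ℝ → ℝ is differentiable on ℝ \ {x_1,…,x_J} with jumps Δm_j = lim_{x↓x_j} m(x) − lim_{x↑x_j} m(x), then E[(m(X)−μ)²] = E[(m(X)−X)²] + 2(E[∇m(X)] + Σ_{j=1}^J Δm_j f(x_j)) − 1, assuming E[(m(X)−X)²] < ∞, E[∇m(X)] < ∞, and (m(x)−x)φ(x−μ) → 0 as |x| → ∞, ϑ-a.s. -/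
open MeasureTheory ProbabilityTheory Filter

/-- Standard normal density. -/
noncomputable def stdGaussPDF (v : ℝ) : ℝ := (Real.sqrt (2 * Real.pi))⁻¹ * Real.exp (-v^2 / 2)

/-!
Write `m(X) - μ = (m(X) - X) + (X - μ)` and expand the square: `E[(X - μ)²] = 1`, so everything
rests on the cross term. Conditionally on `μ = t`, integrate `(m(x) - x)(x - t) φ(x - t)` by parts:
since `φ'(v) = -v φ(v)`, it is minus the derivative of `(m(x) - x) φ(x - t)` plus
`(m'(x) - 1) φ(x - t)`. The fundamental theorem of calculus for a function with finitely many
jumps turns the first part into the boundary terms, which vanish at `±∞` by the decay assumption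
and equal `Δm_j φ(x_j - t)` at the jumps. Integrating over `t ∼ ϑ` turns `φ(x_j - t)` into
`f(x_j)`.
-/

open Set Topology

section Swap

variable {α β E : Type*} [MeasurableSpace α] [MeasurableSpace β] [NormedAddCommGroup E]
  {μ : Measure (α × β)}

lemma integrable_map_swap_iff {g : β × α → E} :
    Integrable g (μ.map Prod.swap) ↔ Integrable (fun z => g z.swap) μ :=
  integrable_map_equiv MeasurableEquiv.prodComm g

lemma integral_map_swap [NormedSpace ℝ E] (g : β × α → E) :
    ∫ z, g z ∂μ.map Prod.swap = ∫ z, g z.swap ∂μ :=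
  integral_map_equiv MeasurableEquiv.prodComm g

end Swap

lemma integral_add_sq_of_memLp {α : Type*} [MeasurableSpace α] {μ : Measure α} {u v : α → ℝ}
    (hu : MemLp u 2 μ) (hv : MemLp v 2 μ) :
    ∫ x, (u x + v x) ^ 2 ∂μ = ∫ x, u x ^ 2 ∂μ + 2 * ∫ x, u x * v x ∂μ + ∫ x, v x ^ 2 ∂μ := by
  have huv : Integrable (fun x => 2 * (u x * v x)) μ := (hu.integrable_mul hv).const_mul 2
  have hsq (x : α) : (u x + v x) ^ 2 = u x ^ 2 + 2 * (u x * v x) + v x ^ 2 := by ring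
  simp_rw [hsq]
  rw [integral_add (f := fun x => u x ^ 2 + 2 * (u x * v x)) (hu.integrable_sq.add huv)
    hv.integrable_sq, integral_add hu.integrable_sq huv, integral_const_mul]

section JumpFTC

variable {F F' : ℝ → ℝ}

theorem intervalIntegral_eq_sub_add_sum_jumps {J : ℕ} {xs Fp Fm : Fin J → ℝ} {a b Fa Fb : ℝ}
    (hxs : StrictMono xs) (hab : a < b) (hxab : ∀ j, xs j ∈ Ioo a b)
    (hderiv : ∀ x ∈ Ioo a b, x ∉ range xs → HasDerivAt F (F' x) x)
    (hint : IntervalIntegrable F' volume a b)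
    (ha : Tendsto F (𝓝[>] a) (𝓝 Fa)) (hb : Tendsto F (𝓝[<] b) (𝓝 Fb))
    (hp : ∀ j, Tendsto F (𝓝[>] xs j) (𝓝 (Fp j))) (hm : ∀ j, Tendsto F (𝓝[<] xs j) (𝓝 (Fm j))) :
    ∫ x in a..b, F' x = Fb - Fa + ∑ j, (Fm j - Fp j) := by
  induction J generalizing a Fa with
  | zero =>
    simpa using intervalIntegral.integral_eq_sub_of_hasDerivAt_of_tendsto hab
      (fun x hx => hderiv x hx (by simp)) hint ha hb
  | succ J ih =>
    obtain ⟨hax, hxb⟩ := hxab 0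
    have hint₁ : IntervalIntegrable F' volume a (xs 0) :=
      hint.mono_set (by simp [uIcc_of_le hab.le, uIcc_of_le hax.le, Icc_subset_Icc_right hxb.le])
    have hint₂ : IntervalIntegrable F' volume (xs 0) b :=
      hint.mono_set (by simp [uIcc_of_le hab.le, uIcc_of_le hxb.le, Icc_subset_Icc_left hax.le])
    have left : ∫ x in a..xs 0, F' x = Fm 0 - Fa := by
      refine intervalIntegral.integral_eq_sub_of_hasDerivAt_of_tendsto hax
        (fun x hx => hderiv x ⟨hx.1, hx.2.trans hxb⟩ ?_) hint₁ ha (hm 0)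
      rintro ⟨j, rfl⟩
      exact hx.2.not_ge (hxs.monotone (Fin.zero_le j))
    have right : ∫ x in xs 0..b, F' x = Fb - Fp 0 + ∑ j : Fin J, (Fm j.succ - Fp j.succ) := by
      refine ih (hxs.comp Fin.strictMono_succ) hxb (fun j => ⟨hxs (Fin.succ_pos j), (hxab _).2⟩)
        (fun x hx hxr => hderiv x ⟨hax.trans hx.1, hx.2⟩ ?_) hint₂ (hp 0)
        (fun j => hp j.succ) (fun j => hm j.succ)
      rintro ⟨j, rfl⟩
      cases j using Fin.cases with
      | zero => exact hx.1.false
      | succ j => exact hxr ⟨j, rfl⟩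
    rw [← intervalIntegral.integral_add_adjacent_intervals hint₁ hint₂, left, right,
      Fin.sum_univ_succ]
    ring

theorem integral_eq_sub_add_sum_jumps {J : ℕ} {xs Fp Fm : Fin J → ℝ} {l r : ℝ}
    (hxs : StrictMono xs) (hderiv : ∀ x ∉ range xs, HasDerivAt F (F' x) x) (hint : Integrable F')
    (htop : Tendsto F atTop (𝓝 r)) (hbot : Tendsto F atBot (𝓝 l))
    (hp : ∀ j, Tendsto F (𝓝[>] xs j) (𝓝 (Fp j))) (hm : ∀ j, Tendsto F (𝓝[<] xs j) (𝓝 (Fm j))) :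
    ∫ x, F' x = r - l + ∑ j, (Fm j - Fp j) := by
  obtain ⟨N, hN⟩ : ∃ N, ∀ j, |xs j| < N :=
    ⟨∑ j, |xs j| + 1, fun j => by
      linarith [Finset.single_le_sum (fun i _ => abs_nonneg (xs i)) (Finset.mem_univ j)]⟩
  have hcont : ∀ x, N < |x| → ContinuousAt F x := fun x hx =>
    (hderiv x (by rintro ⟨j, rfl⟩; linarith [hN j])).continuousAt
  have hsymm : ∀ᶠ n in atTop, ∫ x in -n..n, F' x = F n - F (-n) + ∑ j, (Fm j - Fp j) := by
    filter_upwards [eventually_gt_atTop N, eventually_gt_atTop 0] with n hnN hn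
    have hn' : N < |n| := by rwa [abs_of_pos hn]
    exact intervalIntegral_eq_sub_add_sum_jumps hxs (by linarith)
      (fun j => abs_lt.1 ((hN j).trans hnN)) (fun x _ hx => hderiv x hx) hint.intervalIntegrable
      ((hcont _ (by rwa [abs_neg])).tendsto.mono_left nhdsWithin_le_nhds)
      ((hcont _ hn').tendsto.mono_left nhdsWithin_le_nhds) hp hm
  refine tendsto_nhds_unique
    ((intervalIntegral_tendsto_integral hint tendsto_neg_atTop_atBot tendsto_id).congr' hsymm) ?_
  exact (htop.sub (hbot.comp tendsto_neg_atTop_atBot)).add_const _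

end JumpFTC

lemma stdGaussPDF_sub_eq_gaussianPDFReal (t x : ℝ) :
    stdGaussPDF (x - t) = gaussianPDFReal t 1 x := by
  simp [gaussianPDFReal, stdGaussPDF]

@[fun_prop]
lemma continuous_stdGaussPDF : Continuous stdGaussPDF := by
  unfold stdGaussPDF; fun_prop

lemma stdGaussPDF_nonneg (v : ℝ) : 0 ≤ stdGaussPDF v := by
  unfold stdGaussPDF; positivity

lemma stdGaussPDF_le (v : ℝ) : stdGaussPDF v ≤ (Real.sqrt (2 * Real.pi))⁻¹ :=
  mul_le_of_le_one_right (by positivity) (Real.exp_le_one_iff.2 (by nlinarith [sq_nonneg v]))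

lemma hasDerivAt_stdGaussPDF (v : ℝ) : HasDerivAt stdGaussPDF (-v * stdGaussPDF v) v := by
  unfold stdGaussPDF
  exact ((((hasDerivAt_pow 2 v).neg.div_const 2).exp).const_mul _).congr_deriv
    (by simp only [Pi.neg_apply]; push_cast; ring)

lemma integral_gaussianReal_one (t : ℝ) (g : ℝ → ℝ) :
    ∫ x, g x ∂gaussianReal t 1 = ∫ x, stdGaussPDF (x - t) * g x := by
  simp [integral_gaussianReal_eq_integral_smul one_ne_zero, stdGaussPDF_sub_eq_gaussianPDFReal]

lemma integrable_gaussianReal_one_iff (t : ℝ) (g : ℝ → ℝ) :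
    Integrable g (gaussianReal t 1) ↔ Integrable (fun x => stdGaussPDF (x - t) * g x) := by
  rw [gaussianReal_of_var_ne_zero _ one_ne_zero, integrable_withDensity_iff_integrable_smul'
    (measurable_gaussianPDF _ _) (ae_of_all _ fun _ => gaussianPDF_lt_top)]
  simp [toReal_gaussianPDF, stdGaussPDF_sub_eq_gaussianPDFReal]

lemma integrable_sq_sub_gaussianReal (t : ℝ) (v : NNReal) :
    Integrable (fun x => (x - t) ^ 2) (gaussianReal t v) :=
  ((memLp_id_gaussianReal 2).sub (memLp_const t)).integrable_sq

lemma integral_sq_sub_gaussianReal (t : ℝ) (v : NNReal) :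
    ∫ x, (x - t) ^ 2 ∂gaussianReal t v = v := by
  rw [← variance_fun_id_gaussianReal (μ := t) (v := v),
    variance_eq_integral aemeasurable_id', integral_id_gaussianReal]

theorem integral_mul_sub_gaussianReal {J : ℕ} {xs gp gm : Fin J → ℝ} {g g' : ℝ → ℝ} {t : ℝ}
    (hxs : StrictMono xs) (hderiv : ∀ x ∉ range xs, HasDerivAt g (g' x) x)
    (hp : ∀ j, Tendsto g (𝓝[>] xs j) (𝓝 (gp j))) (hm : ∀ j, Tendsto g (𝓝[<] xs j) (𝓝 (gm j)))
    (hg : Integrable (fun x => g x * (x - t)) (gaussianReal t 1))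
    (hg' : Integrable g' (gaussianReal t 1))
    (htop : Tendsto (fun x => g x * stdGaussPDF (x - t)) atTop (𝓝 0))
    (hbot : Tendsto (fun x => g x * stdGaussPDF (x - t)) atBot (𝓝 0)) :
    ∫ x, g x * (x - t) ∂gaussianReal t 1 =
      ∫ x, g' x ∂gaussianReal t 1 + ∑ j, (gp j - gm j) * stdGaussPDF (xs j - t) := by
  rw [integrable_gaussianReal_one_iff] at hg hg'
  have hφ : Continuous fun x => stdGaussPDF (x - t) :=
    continuous_stdGaussPDF.comp (continuous_sub_right t)
  have hφ_at (x : ℝ) (s : Set ℝ) :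
      Tendsto (fun x => stdGaussPDF (x - t)) (𝓝[s] x) (𝓝 (stdGaussPDF (x - t))) :=
    (hφ.tendsto x).mono_left nhdsWithin_le_nhds
  have parts := integral_eq_sub_add_sum_jumps (F := fun x => g x * stdGaussPDF (x - t))
    (F' := fun x => stdGaussPDF (x - t) * g' x - stdGaussPDF (x - t) * (g x * (x - t))) hxs
    (fun x hx => ((hderiv x hx).mul
      ((hasDerivAt_stdGaussPDF (x - t)).comp_sub_const x t)).congr_deriv (by ring))
    (hg'.sub hg) htop hbot (fun j => (hp j).mul (hφ_at _ _)) (fun j => (hm j).mul (hφ_at _ _))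
  rw [integral_sub hg' hg] at parts
  rw [integral_gaussianReal_one, integral_gaussianReal_one]
  have hsum : ∑ j, (gm j * stdGaussPDF (xs j - t) - gp j * stdGaussPDF (xs j - t)) =
      -∑ j, (gp j - gm j) * stdGaussPDF (xs j - t) := by
    rw [← Finset.sum_neg_distrib]; congr 1; ext; ring
  linarith

noncomputable def gaussianKernel : Kernel ℝ ℝ where
  toFun t := gaussianReal t 1
  measurable' := measurable_gaussianReal.comp (measurable_id.prodMk measurable_const)

lemma gaussianKernel_apply (t : ℝ) : gaussianKernel t = gaussianReal t 1 := rfl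

instance : IsMarkovKernel gaussianKernel :=
  ⟨fun t => by rw [gaussianKernel_apply]; infer_instance⟩

lemma bind_map_prodMk_gaussianReal (ϑ : Measure ℝ) [SFinite ϑ] :
    ϑ.bind (fun t => (gaussianReal t 1).map (·, t)) = (ϑ ⊗ₘ gaussianKernel).map Prod.swap := by
  rw [Measure.compProd_eq_comp_prod, Measure.map_comp _ _ measurable_swap, Kernel.map_prod_swap]
  congr with t : 1
  rw [Kernel.prod_apply, Kernel.id_apply, gaussianKernel_apply, Measure.prod_dirac]

lemma integrable_sq_sub_compProd_gaussianKernel (ϑ : Measure ℝ) [IsFiniteMeasure ϑ] :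
    Integrable (fun z : ℝ × ℝ => (z.2 - z.1) ^ 2) (ϑ ⊗ₘ gaussianKernel) := by
  rw [Measure.integrable_compProd_iff (by fun_prop)]
  refine ⟨ae_of_all _ fun t => integrable_sq_sub_gaussianReal t 1, ?_⟩
  simp only [gaussianKernel_apply, Real.norm_eq_abs, abs_pow, sq_abs,
    integral_sq_sub_gaussianReal]
  exact integrable_const _

lemma integral_sq_sub_compProd_gaussianKernel (ϑ : Measure ℝ) [IsProbabilityMeasure ϑ] :
    ∫ z, (z.2 - z.1) ^ 2 ∂(ϑ ⊗ₘ gaussianKernel) = 1 := by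
  simp [Measure.integral_compProd (integrable_sq_sub_compProd_gaussianKernel ϑ),
    gaussianKernel_apply, integral_sq_sub_gaussianReal]

theorem integral_mul_sub_compProd_gaussianKernel {ϑ : Measure ℝ} [IsFiniteMeasure ϑ] {J : ℕ}
    {xs gp gm : Fin J → ℝ} {g g' : ℝ → ℝ} (hxs : StrictMono xs)
    (hderiv : ∀ x ∉ range xs, HasDerivAt g (g' x) x)
    (hp : ∀ j, Tendsto g (𝓝[>] xs j) (𝓝 (gp j))) (hm : ∀ j, Tendsto g (𝓝[<] xs j) (𝓝 (gm j)))
    (hg : Integrable (fun z : ℝ × ℝ => g z.2 * (z.2 - z.1)) (ϑ ⊗ₘ gaussianKernel))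
    (hg' : Integrable (fun z : ℝ × ℝ => g' z.2) (ϑ ⊗ₘ gaussianKernel))
    (hdecay : ∀ᵐ t ∂ϑ, Tendsto (fun x => g x * stdGaussPDF (x - t)) atTop (𝓝 0) ∧
      Tendsto (fun x => g x * stdGaussPDF (x - t)) atBot (𝓝 0)) :
    ∫ z, g z.2 * (z.2 - z.1) ∂(ϑ ⊗ₘ gaussianKernel) =
      ∫ z, g' z.2 ∂(ϑ ⊗ₘ gaussianKernel) +
        ∑ j, (gp j - gm j) * ∫ t, stdGaussPDF (xs j - t) ∂ϑ := by
  have hφ (j : Fin J) : Integrable (fun t => (gp j - gm j) * stdGaussPDF (xs j - t)) ϑ :=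
    .const_mul (.of_bound (by fun_prop) _ (ae_of_all _ fun t => by
      rw [Real.norm_of_nonneg (stdGaussPDF_nonneg _)]; exact stdGaussPDF_le _)) _
  have hg'_int : Integrable (fun t => ∫ x, g' x ∂gaussianKernel t) ϑ := hg'.integral_compProd
  rw [Measure.integral_compProd hg, Measure.integral_compProd hg']
  calc ∫ t, ∫ x, g x * (x - t) ∂gaussianKernel t ∂ϑ
      = ∫ t, (∫ x, g' x ∂gaussianKernel t + ∑ j, (gp j - gm j) * stdGaussPDF (xs j - t)) ∂ϑ := by
        refine integral_congr_ae ?_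
        filter_upwards [hg.ae_of_compProd, hg'.ae_of_compProd, hdecay] with t hgt hg't hdt
        exact integral_mul_sub_gaussianReal hxs hderiv hp hm hgt hg't hdt.1 hdt.2
    _ = _ := by
        rw [integral_add hg'_int (integrable_finsetSum _ fun j _ => hφ j),
          integral_finsetSum _ fun j _ => hφ j]
        simp_rw [integral_const_mul]

theorem sure_piecewise_general (ϑ : Measure ℝ) [IsProbabilityMeasure ϑ]
    (J : ℕ) (xs : Fin J → ℝ) (hxs : StrictMono xs)
    (m m' : ℝ → ℝ)
    (hderiv : ∀ y : ℝ, y ∉ Set.range xs → HasDerivAt m (m' y) y)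
    -- one-sided limits and jumps at the discontinuity points
    (mplus mminus : Fin J → ℝ)
    (hplus : ∀ j, Filter.Tendsto m (nhdsWithin (xs j) (Set.Ioi (xs j))) (nhds (mplus j)))
    (hminus : ∀ j, Filter.Tendsto m (nhdsWithin (xs j) (Set.Iio (xs j))) (nhds (mminus j)))
    -- marginal density of X
    (f : ℝ → ℝ) (hf : ∀ x, f x = ∫ t, stdGaussPDF (x - t) ∂ϑ)
    -- joint distribution of (X, μ)
    (π : Measure (ℝ × ℝ))
    (hπ : π = Measure.bind ϑ (fun t => Measure.map (fun x => (x, t)) (gaussianReal t 1)))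
    -- integrability and boundary conditions
    (hint1 : Integrable (fun z : ℝ × ℝ => (m z.1 - z.1)^2) π)
    (hint2 : Integrable (fun z : ℝ × ℝ => m' z.1) π)
    (hbound : ∀ᵐ t ∂ϑ,
      Filter.Tendsto (fun x => (m x - x) * stdGaussPDF (x - t)) Filter.atTop (nhds 0) ∧
      Filter.Tendsto (fun x => (m x - x) * stdGaussPDF (x - t)) Filter.atBot (nhds 0)) :
    ∫ z, (m z.1 - z.2)^2 ∂π =
      (∫ z, (m z.1 - z.1)^2 ∂π) +
        2 * ((∫ z, m' z.1 ∂π) + ∑ j, (mplus j - mminus j) * f (xs j)) - 1 := by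
  subst hπ
  rw [bind_map_prodMk_gaussianReal, integrable_map_swap_iff] at hint1 hint2
  simp only [Prod.fst_swap] at hint1 hint2
  simp only [bind_map_prodMk_gaussianReal, integral_map_swap, Prod.fst_swap, Prod.snd_swap]
  have hm : Measurable m :=
    ContinuousOn.measurable_of_countable_compl (s := (range xs)ᶜ)
      (fun x hx => (hderiv x hx).continuousAt.continuousWithinAt)
      (by rw [compl_compl]; exact (finite_range xs).countable)
  have hu : MemLp (fun z : ℝ × ℝ => m z.2 - z.2) 2 (ϑ ⊗ₘ gaussianKernel) :=
    (memLp_two_iff_integrable_sq (by fun_prop)).2 hint1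
  have hv : MemLp (fun z : ℝ × ℝ => z.2 - z.1) 2 (ϑ ⊗ₘ gaussianKernel) :=
    (memLp_two_iff_integrable_sq (by fun_prop)).2 (integrable_sq_sub_compProd_gaussianKernel ϑ)
  have cross := integral_mul_sub_compProd_gaussianKernel (g := fun x => m x - x)
    (g' := fun x => m' x - 1) hxs (fun x hx => (hderiv x hx).sub (hasDerivAt_id x))
    (fun j => (hplus j).sub continuousWithinAt_id.tendsto)
    (fun j => (hminus j).sub continuousWithinAt_id.tendsto)
    (hu.integrable_mul hv) (hint2.sub (integrable_const 1)) hbound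
  rw [integral_sub hint2 (integrable_const 1)] at cross
  calc ∫ z, (m z.2 - z.1) ^ 2 ∂(ϑ ⊗ₘ gaussianKernel)
      = ∫ z, ((m z.2 - z.2) + (z.2 - z.1)) ^ 2 ∂(ϑ ⊗ₘ gaussianKernel) := by simp
    _ = _ := by
      rw [integral_add_sq_of_memLp hu hv, cross, integral_sq_sub_compProd_gaussianKernel]
      simp only [hf, id, sub_sub_sub_cancel_right, integral_const, probReal_univ, smul_eq_mul,
        mul_one]
      ring

/-- Stein's unbiased risk estimate for piecewise differentiable estimators (Lemma 4):
if `μ ∼ ϑ`, `X | μ ∼ N(μ, 1)`, `f = ϑ ∗ φ` is the marginal density of `X`, and `m` is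
differentiable away from finitely many jump points `x_1 < … < x_J` with jumps `Δm_j`, then
`E[(m(X)−μ)²] = E[(m(X)−X)²] + 2(E[∇m(X)] + Σ_j Δm_j f(x_j)) − 1`. -/
theorem sure_piecewise (ϑ : Measure ℝ) [IsProbabilityMeasure ϑ]
    (J : ℕ) (xs : Fin J → ℝ) (hxs : StrictMono xs)
    (m m' : ℝ → ℝ) (hm'm : Measurable m') (hmm : Measurable m)
    (hderiv : ∀ y : ℝ, y ∉ Set.range xs → HasDerivAt m (m' y) y)
    -- one-sided limits and jumps at the discontinuity points
    (mplus mminus : Fin J → ℝ)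
    (hplus : ∀ j, Filter.Tendsto m (nhdsWithin (xs j) (Set.Ioi (xs j))) (nhds (mplus j)))
    (hminus : ∀ j, Filter.Tendsto m (nhdsWithin (xs j) (Set.Iio (xs j))) (nhds (mminus j)))
    -- marginal density of X
    (f : ℝ → ℝ) (hf : ∀ x, f x = ∫ t, stdGaussPDF (x - t) ∂ϑ)
    -- joint distribution of (X, μ)
    (π : Measure (ℝ × ℝ))
    (hπ : π = Measure.bind ϑ (fun t => Measure.map (fun x => (x, t)) (gaussianReal t 1)))
    -- integrability and boundary conditions
    (hint1 : Integrable (fun z : ℝ × ℝ => (m z.1 - z.1)^2) π)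
    (hint2 : Integrable (fun z : ℝ × ℝ => m' z.1) π)
    (hint3 : Integrable (fun z : ℝ × ℝ => (m z.1 - z.2)^2) π)
    (hbound : ∀ᵐ t ∂ϑ,
      Filter.Tendsto (fun x => (m x - x) * stdGaussPDF (x - t)) Filter.atTop (nhds 0) ∧
      Filter.Tendsto (fun x => (m x - x) * stdGaussPDF (x - t)) Filter.atBot (nhds 0)) :
    ∫ z, (m z.1 - z.2)^2 ∂π =
      (∫ z, (m z.1 - z.1)^2 ∂π) +
        2 * ((∫ z, m' z.1 ∂π) + ∑ j, (mplus j - mminus j) * f (xs j)) - 1 :=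
  sure_piecewise_general ϑ J xs hxs m m' hderiv mplus mminus hplus hminus f hf π hπ hint1 hint2
    hbound
end
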